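/- (Convergence of DP-α-NormEC.) Consider the DP-α-NormEC iterates on a probability space (Ω, μ) for differentiable functions f₁, …, f_n : ℝ^d → ℝ, where each f_i has L_i-Lipschitz gradient, and f := (1/n)∑_{i=1}^n f_i has L-Lipschitz gradient and satisfies f(x) ≥ f_inf for all x ∈ ℝ^d, where f_inf ∈ ℝ. Assume the noise vectors z_i^k : Ω → ℝ^d are measurable, ‖z_i^k‖² is integrable with E[‖z_i^k‖²] ≤ σ_DP² for all i, k, and E[⟨z_i^k, z_j^l⟩] = 0 whenever (i, k) ≠ (j, l); assume ĝ⁰ = (1/n)∑_{i=1}^n g_i⁰. Let L_max = max_{1≤i≤n} L_i and R = max_{1≤i≤n} ‖∇f_i(x⁰) − g_i⁰‖. Assume 0 < β ≤ α (which implies β/(α + R) < 1) and 0 < γ ≤ (β·R/(α + R))·(1/L_max). Then for every K ∈ ℕ: min_{0≤k≤K} E[‖∇f(x^k)‖] ≤ (f(x⁰) − f_inf)/(γ(K + 1)) + 2R + (L/2)·γ + 2·√(β²·(K + 1)·σ_DP²). -/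

import Mathlib

/-!
Along every sample path, error feedback keeps each local error `∇fᵢ(xᵏ) - gᵢᵏ` inside the ball of
radius `R`: one step of `e ↦ e - β N_α(e)` shrinks an error of norm at most `R` by at least
`βR/(α+R)`, while the target `∇fᵢ(xᵏ)` moves by at most `L_max γ ≤ βR/(α+R)`. Since `ĝ` starts at
the mean of the `gᵢ` and receives the mean of their increments plus noise, `ĝᵏ⁺¹` is the mean of
the `gᵢᵏ⁺¹` plus the accumulated noise `Zᵏ⁺¹ = (β/n) ∑_{l ≤ k} ∑ᵢ zᵢˡ`, so
`‖∇f(xᵏ) - ĝᵏ⁺¹‖ ≤ R + ‖Zᵏ⁺¹‖`. A normalized step of length `γ` along a direction within `δ` of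
the gradient decreases an `L`-smooth `f` by at least `γ‖∇f‖ - 2γδ - Lγ²/2`. Taking expectations,
with `E‖Zᵏ⁺¹‖ ≤ √(E‖Zᵏ⁺¹‖²) ≤ √(β²(k+1)σ²)` by orthogonality of the noise, and telescoping over
`k ≤ K` gives the bound on the smallest expected gradient norm.
-/

open MeasureTheory
open scoped Classical

open Finset

theorem continuous_of_norm_sub_le {F G : Type*} [SeminormedAddCommGroup F]
    [SeminormedAddCommGroup G] {h : F → G} {L : ℝ} (hh : ∀ a b, ‖h a - h b‖ ≤ L * ‖a - b‖) :
    Continuous h :=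
  (LipschitzWith.of_dist_le' fun a b => by simpa only [dist_eq_norm] using hh a b).continuous

section NormedSpace

variable {F : Type*} [NormedAddCommGroup F] [NormedSpace ℝ F]

theorem norm_inv_norm_smul_le_one (v : F) : ‖‖v‖⁻¹ • v‖ ≤ 1 := by
  rw [norm_smul, norm_inv, norm_norm]
  exact inv_mul_le_one_of_le₀ le_rfl (norm_nonneg v)

theorem norm_smul_inv_norm_smul_le {γ : ℝ} (hγ : 0 ≤ γ) (v : F) : ‖γ • ‖v‖⁻¹ • v‖ ≤ γ := by
  rw [norm_smul, Real.norm_of_nonneg hγ]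
  exact mul_le_of_le_one_right hγ (norm_inv_norm_smul_le_one v)

theorem ite_eq_sub_smul_inv_norm_smul (x v : F) [Decidable (v = 0)] (γ : ℝ) :
    (if v = 0 then x else x - γ • ‖v‖⁻¹ • v) = x - γ • ‖v‖⁻¹ • v := by
  split_ifs with hv <;> simp [hv]

noncomputable def smoothedNormalize (α : ℝ) (v : F) : F := (α + ‖v‖)⁻¹ • v

theorem sub_mul_div_add_le_of_le {α β s R : ℝ} (hα : 0 < α) (hβα : β ≤ α) (hs : 0 ≤ s)
    (hsR : s ≤ R) : s - β * s / (α + s) ≤ R - β * R / (α + R) := by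
  have hαs : 0 < α + s := by linarith
  have hαR : 0 < α + R := by linarith
  -- the difference of the two sides is `(R - s) (1 - αβ / ((α + R) (α + s)))`
  have key : β * R / (α + R) - β * s / (α + s) ≤ R - s := by
    rw [div_sub_div _ _ hαR.ne' hαs.ne', div_le_iff₀ (by positivity)]
    nlinarith [mul_nonneg (sub_nonneg.mpr hsR) (sub_nonneg.mpr
      (show β * α ≤ (α + R) * (α + s) by nlinarith))]
  linarith

theorem norm_sub_smul_smoothedNormalize {α β : ℝ} (hα : 0 < α) (hβα : β ≤ α) (e : F) :
    ‖e - β • smoothedNormalize α e‖ = ‖e‖ - β * ‖e‖ / (α + ‖e‖) := by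
  have hpos : 0 < α + ‖e‖ := by positivity
  have hcoef : 0 ≤ 1 - β / (α + ‖e‖) := by
    rw [sub_nonneg, div_le_one hpos]
    linarith [norm_nonneg e]
  have hfac : e - β • smoothedNormalize α e = (1 - β / (α + ‖e‖)) • e := by
    rw [smoothedNormalize, smul_smul, sub_smul, one_smul, div_eq_mul_inv]
  rw [hfac, norm_smul, Real.norm_eq_abs, abs_of_nonneg hcoef]
  ring

theorem norm_sub_smul_smoothedNormalize_le {α β R : ℝ} (hα : 0 < α) (hβα : β ≤ α) {e : F}
    (he : ‖e‖ ≤ R) : ‖e - β • smoothedNormalize α e‖ ≤ R - β * R / (α + R) :=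
  (norm_sub_smul_smoothedNormalize hα hβα e).trans_le
    (sub_mul_div_add_le_of_le hα hβα (norm_nonneg e) he)

theorem norm_sub_le_of_error_feedback {G g : ℕ → F} {α β R : ℝ} (hα : 0 < α) (hβα : β ≤ α)
    (hG : ∀ k, ‖G (k + 1) - G k‖ ≤ β * R / (α + R)) (h0 : ‖G 0 - g 0‖ ≤ R)
    (hg : ∀ k, g (k + 1) = g k + β • smoothedNormalize α (G k - g k)) :
    ∀ k, ‖G k - g k‖ ≤ R
  | 0 => h0
  | k + 1 => by
    have hsplit : G (k + 1) - g (k + 1) =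
        (G (k + 1) - G k) + (G k - g k - β • smoothedNormalize α (G k - g k)) := by
      rw [hg k]
      abel
    rw [hsplit]
    refine (norm_add_le _ _).trans ?_
    linarith [hG k, norm_sub_smul_smoothedNormalize_le hα hβα
      (norm_sub_le_of_error_feedback hα hβα hG h0 hg k)]

end NormedSpace

section InnerProductSpace

variable {E : Type*} [NormedAddCommGroup E] [InnerProductSpace ℝ E]

theorem inner_inv_norm_smul_self (v : E) : inner ℝ v (‖v‖⁻¹ • v) = ‖v‖ := by
  rw [real_inner_smul_right, real_inner_self_eq_norm_sq]
  rcases eq_or_ne ‖v‖ 0 with hv | hv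
  · simp [hv]
  · field_simp

theorem norm_sub_two_mul_norm_sub_le_inner_inv_norm_smul (a b : E) :
    ‖a‖ - 2 * ‖a - b‖ ≤ inner ℝ a (‖b‖⁻¹ • b) := by
  have hcs : -‖a - b‖ ≤ inner ℝ (a - b) (‖b‖⁻¹ • b) := by
    have := (abs_le.mp (abs_real_inner_le_norm (a - b) (‖b‖⁻¹ • b))).1
    nlinarith [norm_inv_norm_smul_le_one b, norm_nonneg (a - b)]
  have hsplit : inner ℝ a (‖b‖⁻¹ • b) = inner ℝ (a - b) (‖b‖⁻¹ • b) + ‖b‖ := by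
    conv_lhs => rw [← sub_add_cancel a b]
    rw [inner_add_left, inner_inv_norm_smul_self]
  linarith [norm_le_norm_sub_add a b]

variable [CompleteSpace E]

theorem gradient_eq_smul_sum_of_eq_mul_sum {ι : Type*} {s : Finset ι} {fi : ι → E → ℝ}
    {f : E → ℝ} {c : ℝ} (hf : ∀ y, f y = c * ∑ i ∈ s, fi i y)
    (hfi : ∀ i ∈ s, Differentiable ℝ (fi i)) (y : E) :
    gradient f y = c • ∑ i ∈ s, gradient (fi i) y := by
  refine HasGradientAt.gradient ?_
  rw [funext hf, hasGradientAt_iff_hasFDerivAt, map_smul, map_sum]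
  exact (HasFDerivAt.fun_sum fun i hi => (hfi i hi y).hasGradientAt.hasFDerivAt).const_mul c

theorem descent_lemma {f : E → ℝ} (hf : Differentiable ℝ f) {L : ℝ}
    (hlip : ∀ a b, ‖gradient f a - gradient f b‖ ≤ L * ‖a - b‖) (x y : E) :
    f y ≤ f x + inner ℝ (gradient f x) (y - x) + L / 2 * ‖y - x‖ ^ 2 := by
  set v := y - x
  let φ : ℝ → ℝ := fun t =>
    f (x + t • v) - t * inner ℝ (gradient f x) v - L / 2 * t ^ 2 * ‖v‖ ^ 2
  have hφ : ∀ t, HasDerivAt φ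
      (inner ℝ (gradient f (x + t • v)) v - inner ℝ (gradient f x) v - L * t * ‖v‖ ^ 2) t := by
    intro t
    have hline : HasDerivAt (fun t : ℝ => x + t • v) v t := by
      simpa using ((hasDerivAt_id t).smul_const v).const_add x
    have hcomp := (hf (x + t • v)).hasFDerivAt.comp_hasDerivAt t hline
    rw [show fderiv ℝ f (x + t • v) v = inner ℝ (gradient f (x + t • v)) v by
      rw [gradient, InnerProductSpace.toDual_symm_apply]] at hcomp
    refine ((hcomp.sub ((hasDerivAt_id t).mul_const (inner ℝ (gradient f x) v))).sub
      ((((hasDerivAt_id t).pow 2).const_mul (L / 2)).mul_const (‖v‖ ^ 2))).congr_deriv ?_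
    simp only [id, one_mul]
    push_cast
    ring
  have hanti : AntitoneOn φ (Set.Ici 0) := by
    refine antitoneOn_of_hasDerivWithinAt_nonpos (convex_Ici 0)
      (fun t _ => (hφ t).continuousAt.continuousWithinAt)
      (fun t _ => (hφ t).hasDerivWithinAt) fun t ht => ?_
    rw [interior_Ici] at ht
    have hnorm : ‖gradient f (x + t • v) - gradient f x‖ ≤ L * (t * ‖v‖) := by
      simpa [norm_smul, abs_of_pos (show 0 < t from ht)] using hlip (x + t • v) x
    calc _ = inner ℝ (gradient f (x + t • v) - gradient f x) v - L * t * ‖v‖ ^ 2 := by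
          rw [inner_sub_left]
      _ ≤ ‖gradient f (x + t • v) - gradient f x‖ * ‖v‖ - L * t * ‖v‖ ^ 2 :=
          sub_le_sub_right (real_inner_le_norm _ _) _
      _ ≤ 0 := by nlinarith [mul_le_mul_of_nonneg_right hnorm (norm_nonneg v)]
  have h01 := hanti Set.self_mem_Ici (show (0 : ℝ) ≤ 1 by norm_num) zero_le_one
  simp only [φ, v, one_smul, add_sub_cancel, zero_smul, add_zero] at h01
  linarith

theorem mul_norm_gradient_le_of_normalized_step {f : E → ℝ} (hf : Differentiable ℝ f) {L : ℝ}
    (hL : 0 ≤ L) (hlip : ∀ a b, ‖gradient f a - gradient f b‖ ≤ L * ‖a - b‖) (x v : E) {γ : ℝ}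
    (hγ : 0 ≤ γ) :
    γ * ‖gradient f x‖ ≤
      f x - f (x - γ • ‖v‖⁻¹ • v) + γ * (2 * ‖gradient f x - v‖ + L / 2 * γ) := by
  have hdesc := descent_lemma hf hlip x (x - γ • ‖v‖⁻¹ • v)
  have hinner := norm_sub_two_mul_norm_sub_le_inner_inv_norm_smul (gradient f x) v
  have hsq : ‖-(γ • ‖v‖⁻¹ • v)‖ ^ 2 ≤ γ ^ 2 := by
    rw [norm_neg]
    exact pow_le_pow_left₀ (norm_nonneg _) (norm_smul_inv_norm_smul_le hγ v) 2
  rw [sub_sub_cancel_left, inner_neg_right, real_inner_smul_right] at hdesc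
  nlinarith [mul_le_mul_of_nonneg_left hinner hγ,
    mul_le_mul_of_nonneg_left hsq (by positivity : 0 ≤ L / 2)]

end InnerProductSpace

section Run

variable {E : Type*} [NormedAddCommGroup E] [InnerProductSpace ℝ E] [CompleteSpace E] {n : ℕ}

/-- A sample path of DP-α-NormEC for the noise realization `z`. Since `‖0‖⁻¹ • 0 = 0`, the update
of `x` also covers the case `ĝ (k + 1) = 0`, in which `x` does not move. -/
structure IsDPNormECRun (fi : Fin n → E → ℝ) (α β γ : ℝ) (x : ℕ → E) (g z : Fin n → ℕ → E)
    (ĝ : ℕ → E) : Prop where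
  ghat_zero : ĝ 0 = (n : ℝ)⁻¹ • ∑ i, g i 0
  g_succ : ∀ i k, g i (k + 1) = g i k + β • smoothedNormalize α (gradient (fi i) (x k) - g i k)
  ghat_succ : ∀ k, ĝ (k + 1) =
    ĝ k + (β / n) • ∑ i, (smoothedNormalize α (gradient (fi i) (x k) - g i k) + z i k)
  x_succ : ∀ k, x (k + 1) = x k - γ • ‖ĝ (k + 1)‖⁻¹ • ĝ (k + 1)

namespace IsDPNormECRun

variable {fi : Fin n → E → ℝ} {α β γ : ℝ} {x : ℕ → E} {g z : Fin n → ℕ → E} {ĝ : ℕ → E}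

theorem norm_succ_sub_le (hrun : IsDPNormECRun fi α β γ x g z ĝ) (hγ : 0 ≤ γ) (k : ℕ) :
    ‖x (k + 1) - x k‖ ≤ γ := by
  rw [hrun.x_succ, sub_sub_cancel_left, norm_neg]
  exact norm_smul_inv_norm_smul_le hγ _

theorem ghat_eq (hrun : IsDPNormECRun fi α β γ x g z ĝ) :
    ∀ k, ĝ k = (n : ℝ)⁻¹ • ∑ i, g i k + (β / n) • ∑ l ∈ range k, ∑ i, z i l
  | 0 => by simp [hrun.ghat_zero]
  | k + 1 => by
    rw [hrun.ghat_succ, hrun.ghat_eq k, sum_range_succ]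
    simp only [hrun.g_succ, sum_add_distrib, ← smul_sum, smul_add, smul_smul, div_eq_mul_inv]
    rw [mul_comm (n : ℝ)⁻¹ β]
    abel

theorem norm_gradient_sub_le (hrun : IsDPNormECRun fi α β γ x g z ĝ) (hα : 0 < α) (hβα : β ≤ α)
    (hγ : 0 ≤ γ) {Li : Fin n → ℝ} (hLi : ∀ i, 0 ≤ Li i)
    (hlipi : ∀ i a b, ‖gradient (fi i) a - gradient (fi i) b‖ ≤ Li i * ‖a - b‖) {R : ℝ}
    (hLiγ : ∀ i, Li i * γ ≤ β * R / (α + R)) (h0 : ∀ i, ‖gradient (fi i) (x 0) - g i 0‖ ≤ R)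
    (i : Fin n) (k : ℕ) : ‖gradient (fi i) (x k) - g i k‖ ≤ R :=
  norm_sub_le_of_error_feedback hα hβα (fun k => (hlipi i _ _).trans <|
      (mul_le_mul_of_nonneg_left (hrun.norm_succ_sub_le hγ k) (hLi i)).trans (hLiγ i))
    (h0 i) (hrun.g_succ i) k

theorem mul_norm_gradient_le (hrun : IsDPNormECRun fi α β γ x g z ĝ) (hn : 0 < n) {f : E → ℝ}
    (hgradf : ∀ y, gradient f y = (n : ℝ)⁻¹ • ∑ i, gradient (fi i) y)
    (hf : Differentiable ℝ f) {L : ℝ} (hL : 0 ≤ L)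
    (hlip : ∀ a b, ‖gradient f a - gradient f b‖ ≤ L * ‖a - b‖)
    (hα : 0 < α) (hβ : 0 ≤ β) (hβα : β ≤ α) (hγ : 0 ≤ γ) {R : ℝ} (hR : 0 ≤ R)
    (herr : ∀ i k, ‖gradient (fi i) (x k) - g i k‖ ≤ R) (k : ℕ) :
    γ * ‖gradient f (x k)‖ ≤ f (x k) - f (x (k + 1)) +
      γ * (2 * R + L / 2 * γ + 2 * ‖(β / n) • ∑ l ∈ range (k + 1), ∑ i, z i l‖) := by
  set Z := (β / n) • ∑ l ∈ range (k + 1), ∑ i, z i l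
  have hlocal : ∀ i, ‖gradient (fi i) (x k) - g i (k + 1)‖ ≤ R := fun i => by
    have := norm_sub_smul_smoothedNormalize_le hα hβα (herr i k)
    rw [hrun.g_succ, ← sub_sub]
    nlinarith [div_nonneg (mul_nonneg hβ hR) (add_pos_of_pos_of_nonneg hα hR).le]
  have hmean : ‖(n : ℝ)⁻¹ • ∑ i, (gradient (fi i) (x k) - g i (k + 1))‖ ≤ R := by
    rw [norm_smul, norm_inv, Real.norm_natCast, inv_mul_le_iff₀ (Nat.cast_pos.mpr hn)]
    simpa using norm_sum_le_of_le univ fun i _ => hlocal i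
  have hgap : ‖gradient f (x k) - ĝ (k + 1)‖ ≤ R + ‖Z‖ := by
    have hsplit : gradient f (x k) - ĝ (k + 1) =
        (n : ℝ)⁻¹ • ∑ i, (gradient (fi i) (x k) - g i (k + 1)) - Z := by
      rw [hgradf, hrun.ghat_eq, sum_sub_distrib, smul_sub]
      abel
    rw [hsplit]
    exact (norm_sub_le _ _).trans (add_le_add_left hmean _)
  have hstep := mul_norm_gradient_le_of_normalized_step hf hL hlip (x k) (ĝ (k + 1)) hγ
  rw [hrun.x_succ k]
  nlinarith [mul_le_mul_of_nonneg_left hgap hγ]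

end IsDPNormECRun

theorem measurable_smoothedNormalize {F : Type*} [NormedAddCommGroup F] [NormedSpace ℝ F]
    [MeasurableSpace F] [BorelSpace F] [SecondCountableTopology F] (α : ℝ) :
    Measurable (smoothedNormalize (F := F) α) := by
  unfold smoothedNormalize
  fun_prop

theorem measurable_of_isDPNormECRun {Ω : Type*} [MeasurableSpace Ω] [MeasurableSpace E]
    [BorelSpace E] [SecondCountableTopology E] {fi : Fin n → E → ℝ} {α β γ : ℝ}
    {x ĝ : ℕ → Ω → E} {g z : Fin n → ℕ → Ω → E}
    (hrun : ∀ ω, IsDPNormECRun fi α β γ (x · ω) (g · · ω) (z · · ω) (ĝ · ω))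
    (hG : ∀ i, Measurable (gradient (fi i))) (hz : ∀ i k, Measurable (z i k))
    (hx0 : Measurable (x 0)) (hg0 : ∀ i, Measurable (g i 0)) (k : ℕ) :
    Measurable (x k) ∧ (∀ i, Measurable (g i k)) := by
  induction k with
  | zero => exact ⟨hx0, hg0⟩
  | succ k ih =>
    obtain ⟨hxk, hgk⟩ := ih
    have hg : ∀ i, Measurable (g i (k + 1)) := fun i => by
      have heq : g i (k + 1) = fun ω =>
          g i k ω + β • smoothedNormalize α (gradient (fi i) (x k ω) - g i k ω) :=
        funext fun ω => (hrun ω).g_succ i k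
      rw [heq]
      exact (hgk i).add (((measurable_smoothedNormalize α).comp
        (((hG i).comp hxk).sub (hgk i))).const_smul β)
    have hĝ : Measurable (ĝ (k + 1)) := by
      have heq : ĝ (k + 1) = fun ω => (n : ℝ)⁻¹ • ∑ i, g i (k + 1) ω +
          (β / n) • ∑ l ∈ range (k + 1), ∑ i, z i l ω :=
        funext fun ω => (hrun ω).ghat_eq (k + 1)
      rw [heq]
      exact ((Finset.measurable_sum _ fun i _ => hg i).const_smul _).add
        ((Finset.measurable_sum _ fun l _ => Finset.measurable_sum _ fun i _ => hz i l).const_smul _)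
    refine ⟨?_, hg⟩
    have heq : x (k + 1) = fun ω => x k ω - γ • ‖ĝ (k + 1) ω‖⁻¹ • ĝ (k + 1) ω :=
      funext fun ω => (hrun ω).x_succ k
    rw [heq]
    exact hxk.sub ((hĝ.norm.inv.smul hĝ).const_smul γ)

end Run

theorem inf'_range_le_of_descent {φ F : ℕ → ℝ} {γ c Fmin : ℝ} (hγ : 0 < γ) (K : ℕ)
    (hstep : ∀ k ≤ K, γ * φ k ≤ F k - F (k + 1) + γ * c) (hmin : Fmin ≤ F (K + 1)) :
    (range (K + 1)).inf' (nonempty_range_iff.mpr K.succ_ne_zero) φ ≤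
      (F 0 - Fmin) / (γ * (K + 1)) + c := by
  set m := (range (K + 1)).inf' (nonempty_range_iff.mpr K.succ_ne_zero) φ
  have hm : ((K : ℝ) + 1) * m ≤ ∑ k ∈ range (K + 1), φ k := by
    simpa using card_nsmul_le_sum _ φ m fun k hk => inf'_le φ hk
  have htel : γ * ∑ k ∈ range (K + 1), φ k ≤ F 0 - F (K + 1) + ((K : ℝ) + 1) * (γ * c) := by
    rw [mul_sum, ← sum_range_sub']
    simpa [sum_add_distrib] using
      sum_le_sum fun k hk => hstep k (Nat.lt_succ_iff.mp (mem_range.mp hk))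
  rw [div_add' _ _ _ (by positivity), le_div_iff₀ (by positivity)]
  nlinarith [mul_le_mul_of_nonneg_left hm hγ.le]

section Expectation

variable {Ω : Type*} [MeasurableSpace Ω] {μ : Measure Ω}

theorem integrable_comp_of_norm_succ_sub_le [IsFiniteMeasure μ] {E Y : Type*}
    [NormedAddCommGroup E] [ProperSpace E] [NormedAddCommGroup Y] {X : ℕ → Ω → E} {x0 : E}
    {γ : ℝ} (hX : ∀ k, AEStronglyMeasurable (X k) μ) (hX0 : ∀ ω, X 0 ω = x0)
    (hstep : ∀ k ω, ‖X (k + 1) ω - X k ω‖ ≤ γ) {h : E → Y} (hh : Continuous h) (k : ℕ) :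
    Integrable (fun ω => h (X k ω)) μ := by
  have hball : ∀ ω, X k ω ∈ Metric.closedBall x0 (k * γ) := fun ω => by
    have := dist_le_range_sum_of_dist_le (f := (X · ω)) (d := fun _ => γ) k fun {j} _ => by
      rw [dist_comm, dist_eq_norm]
      exact hstep j ω
    simpa [hX0, dist_comm] using this
  obtain ⟨C, hC⟩ :=
    (isCompact_closedBall x0 (k * γ)).exists_bound_of_continuousOn hh.continuousOn
  exact Integrable.of_bound (hh.comp_aestronglyMeasurable (hX k)) C
    (ae_of_all _ fun ω => hC _ (hball ω))

variable [IsProbabilityMeasure μ]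

theorem inf'_integral_le_of_descent {a F Z : ℕ → Ω → ℝ} {γ c B Fmin : ℝ} (hγ : 0 < γ) (K : ℕ)
    (ha : ∀ k, Integrable (a k) μ) (hF : ∀ k, Integrable (F k) μ) (hZ : ∀ k, Integrable (Z k) μ)
    (hstep : ∀ k ω, γ * a k ω ≤ F k ω - F (k + 1) ω + γ * (c + Z k ω))
    (hZB : ∀ k ≤ K, ∫ ω, Z k ω ∂μ ≤ B) (hmin : ∀ ω, Fmin ≤ F (K + 1) ω) :
    (range (K + 1)).inf' (nonempty_range_iff.mpr K.succ_ne_zero) (fun k => ∫ ω, a k ω ∂μ) ≤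
      (∫ ω, F 0 ω ∂μ - Fmin) / (γ * (K + 1)) + (c + B) := by
  refine inf'_range_le_of_descent (F := fun k => ∫ ω, F k ω ∂μ) hγ K (fun k hk => ?_) ?_
  · have hFF : Integrable (fun ω => F k ω - F (k + 1) ω) μ := (hF k).sub (hF (k + 1))
    have hZc : Integrable (fun ω => γ * (c + Z k ω)) μ :=
      ((integrable_const c).add (hZ k)).const_mul γ
    have hrhs : ∫ ω, (F k ω - F (k + 1) ω + γ * (c + Z k ω)) ∂μ =
        ∫ ω, F k ω ∂μ - ∫ ω, F (k + 1) ω ∂μ + γ * (c + ∫ ω, Z k ω ∂μ) := by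
      rw [integral_add hFF hZc, integral_sub (hF k) (hF (k + 1)), integral_const_mul,
        integral_add (integrable_const c) (hZ k), integral_const]
      simp
    have hint := integral_mono (g := fun ω => F k ω - F (k + 1) ω + γ * (c + Z k ω))
      ((ha k).const_mul γ) (hFF.add hZc) (hstep k)
    rw [integral_const_mul, hrhs] at hint
    nlinarith [mul_le_mul_of_nonneg_left (hZB k hk) hγ.le]
  · simpa using integral_mono (integrable_const Fmin) (hF (K + 1)) hmin

end Expectation

section Noise

variable {Ω F : Type*} [MeasurableSpace Ω] {μ : Measure Ω} [NormedAddCommGroup F]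
  [InnerProductSpace ℝ F]

theorem MeasureTheory.MemLp.integrable_inner {u v : Ω → F} (hu : MemLp u 2 μ)
    (hv : MemLp v 2 μ) : Integrable (fun ω => inner ℝ (u ω) (v ω)) μ :=
  (hu.norm.integrable_mul hv.norm).mono (hu.1.inner hv.1) <| ae_of_all _ fun ω => by
    simpa using abs_real_inner_le_norm (u ω) (v ω)

theorem integral_norm_sum_sq_of_orthogonal {ι : Type*} (s : Finset ι) {w : ι → Ω → F}
    (hw : ∀ p, MemLp (w p) 2 μ)
    (horth : ∀ p ∈ s, ∀ q ∈ s, p ≠ q → ∫ ω, inner ℝ (w p ω) (w q ω) ∂μ = 0) :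
    ∫ ω, ‖∑ p ∈ s, w p ω‖ ^ 2 ∂μ = ∑ p ∈ s, ∫ ω, ‖w p ω‖ ^ 2 ∂μ := by
  simp_rw [← real_inner_self_eq_norm_sq, sum_inner, inner_sum]
  rw [integral_finsetSum s fun p _ => integrable_finsetSum s fun q _ =>
    (hw p).integrable_inner (hw q)]
  refine sum_congr rfl fun p hp => ?_
  rw [integral_finsetSum s fun q _ => (hw p).integrable_inner (hw q),
    sum_eq_single_of_mem p hp fun q hq hqp => horth p hp q hq hqp.symm]

variable [IsProbabilityMeasure μ]

theorem integral_le_sqrt_integral_sq {X : Ω → ℝ} (hX : MemLp X 2 μ) :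
    ∫ ω, X ω ∂μ ≤ √(∫ ω, X ω ^ 2 ∂μ) := by
  have hvar := ProbabilityTheory.variance_nonneg X μ
  rw [ProbabilityTheory.variance_eq_sub hX] at hvar
  exact (le_abs_self _).trans (Real.abs_le_sqrt (by simpa using hvar))

theorem integral_norm_sum_le_sqrt_of_orthogonal {ι : Type*} (s : Finset ι) {w : ι → Ω → F}
    (hw : ∀ p, MemLp (w p) 2 μ)
    (horth : ∀ p ∈ s, ∀ q ∈ s, p ≠ q → ∫ ω, inner ℝ (w p ω) (w q ω) ∂μ = 0)
    {σ : ℝ} (hσ : ∀ p ∈ s, ∫ ω, ‖w p ω‖ ^ 2 ∂μ ≤ σ ^ 2) :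
    ∫ ω, ‖∑ p ∈ s, w p ω‖ ∂μ ≤ √(s.card * σ ^ 2) := by
  have hsum : MemLp (fun ω => ∑ p ∈ s, w p ω) 2 μ := memLp_finsetSum s fun p _ => hw p
  refine (integral_le_sqrt_integral_sq hsum.norm).trans (Real.sqrt_le_sqrt ?_)
  rw [integral_norm_sum_sq_of_orthogonal s hw horth]
  simpa using sum_le_sum hσ

theorem integral_norm_smul_sum_sum_le {n : ℕ} (hn : 0 < n) {z : Fin n → ℕ → Ω → F}
    (hz : ∀ i k, MemLp (z i k) 2 μ)
    (horth : ∀ i k j l, (i, k) ≠ (j, l) → ∫ ω, inner ℝ (z i k ω) (z j l ω) ∂μ = 0)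
    {σ : ℝ} (hσ : ∀ i k, ∫ ω, ‖z i k ω‖ ^ 2 ∂μ ≤ σ ^ 2) {β : ℝ} (hβ : 0 ≤ β) (k : ℕ) :
    ∫ ω, ‖(β / n) • ∑ l ∈ range k, ∑ i, z i l ω‖ ∂μ ≤ √(β ^ 2 * k * σ ^ 2) := by
  have hn' : (0 : ℝ) < n := Nat.cast_pos.mpr hn
  have hsum : ∀ ω, ∑ l ∈ range k, ∑ i, z i l ω = ∑ p ∈ univ ×ˢ range k, z p.1 p.2 ω :=
    fun ω => by rw [sum_product, sum_comm]
  have hbound := integral_norm_sum_le_sqrt_of_orthogonal (μ := μ) (univ ×ˢ range k)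
    (w := fun p => z p.1 p.2) (fun p => hz p.1 p.2) (fun p _ q _ hpq => horth _ _ _ _ hpq)
    (fun p _ => hσ p.1 p.2)
  rw [card_product, card_univ, Fintype.card_fin, card_range] at hbound
  simp_rw [norm_smul, hsum, integral_const_mul, Real.norm_of_nonneg (div_nonneg hβ hn'.le)]
  refine (mul_le_mul_of_nonneg_left hbound (by positivity)).trans ?_
  rw [Real.le_sqrt (by positivity) (by positivity), mul_pow, div_pow,
    Real.sq_sqrt (by positivity)]
  push_cast
  rw [div_mul_eq_mul_div, div_le_iff₀ (by positivity)]
  have hnn : (n : ℝ) ≤ (n : ℝ) ^ 2 := by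
    nlinarith [(Nat.one_le_cast.mpr hn : (1 : ℝ) ≤ n)]
  nlinarith [mul_le_mul_of_nonneg_left hnn (by positivity : 0 ≤ β ^ 2 * k * σ ^ 2)]

end Noise

theorem dp_alpha_normec_convergence_general
    (d n : ℕ) (hn : 0 < n)
    {Ω : Type*} [MeasurableSpace Ω] (μ : Measure Ω) [IsProbabilityMeasure μ]
    (fi : Fin n → EuclideanSpace ℝ (Fin d) → ℝ)
    (f : EuclideanSpace ℝ (Fin d) → ℝ)
    (hf : ∀ y, f y = (n : ℝ)⁻¹ * ∑ i, fi i y)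
    (hdiffi : ∀ i, Differentiable ℝ (fi i))
    (hdiff : Differentiable ℝ f)
    (Li : Fin n → ℝ) (hLipos : ∀ i, 0 < Li i)
    (hlipi : ∀ i x y, ‖gradient (fi i) x - gradient (fi i) y‖ ≤ Li i * ‖x - y‖)
    (L : ℝ) (hL : 0 < L)
    (hlip : ∀ x y, ‖gradient f x - gradient f y‖ ≤ L * ‖x - y‖)
    (finf : ℝ) (hfinf : ∀ y, finf ≤ f y)
    (α β γ σDP Lmax R : ℝ)
    (hLmax : Lmax = Finset.univ.sup' (Finset.univ_nonempty_iff.mpr ⟨⟨0, hn⟩⟩) Li)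
    (x0 : EuclideanSpace ℝ (Fin d)) (g0 : Fin n → EuclideanSpace ℝ (Fin d))
    (x : ℕ → Ω → EuclideanSpace ℝ (Fin d))
    (g : Fin n → ℕ → Ω → EuclideanSpace ℝ (Fin d))
    (ghat : ℕ → Ω → EuclideanSpace ℝ (Fin d))
    (z : Fin n → ℕ → Ω → EuclideanSpace ℝ (Fin d))
    (hzmeas : ∀ i k, Measurable (z i k))
    (hzint : ∀ i k, Integrable (fun ω => ‖z i k ω‖ ^ 2) μ)
    (hzvar : ∀ i k, ∫ ω, ‖z i k ω‖ ^ 2 ∂μ ≤ σDP ^ 2)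
    (hzorth : ∀ (i : Fin n) (k : ℕ) (j : Fin n) (l : ℕ), (i, k) ≠ (j, l) →
      ∫ ω, (inner ℝ (z i k ω) (z j l ω) : ℝ) ∂μ = 0)
    (hx0 : ∀ ω, x 0 ω = x0)
    (hg0 : ∀ i ω, g i 0 ω = g0 i)
    (hghat0 : ∀ ω, ghat 0 ω = (n : ℝ)⁻¹ • ∑ i, g0 i)
    (hR : R = Finset.univ.sup' (Finset.univ_nonempty_iff.mpr ⟨⟨0, hn⟩⟩)
      (fun i => ‖gradient (fi i) x0 - g0 i‖))
    (hβ : 0 < β) (hβα : β ≤ α)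
    (hγ : 0 < γ) (hγle : γ ≤ (β * R / (α + R)) * (1 / Lmax))
    (hg : ∀ (ω : Ω) (i : Fin n) (k : ℕ), g i (k + 1) ω = g i k ω +
      β • ((α + ‖gradient (fi i) (x k ω) - g i k ω‖)⁻¹ •
        (gradient (fi i) (x k ω) - g i k ω)))
    (hghat : ∀ (ω : Ω) (k : ℕ), ghat (k + 1) ω = ghat k ω +
      (β / n) • ∑ i, (((α + ‖gradient (fi i) (x k ω) - g i k ω‖)⁻¹ •
        (gradient (fi i) (x k ω) - g i k ω)) + z i k ω))
    (hx : ∀ (ω : Ω) (k : ℕ), x (k + 1) ω =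
      if ghat (k + 1) ω = 0 then x k ω
      else x k ω - γ • ‖ghat (k + 1) ω‖⁻¹ • ghat (k + 1) ω)
    (K : ℕ) :
    (Finset.range (K + 1)).inf' (Finset.nonempty_range_iff.mpr (Nat.succ_ne_zero K))
        (fun k => ∫ ω, ‖gradient f (x k ω)‖ ∂μ) ≤
      (f x0 - finf) / (γ * (K + 1)) + 2 * R + (L / 2) * γ +
        2 * Real.sqrt (β ^ 2 * (K + 1) * σDP ^ 2) := by
  have hα : 0 < α := hβ.trans_le hβα
  have hinit : ∀ i, ‖gradient (fi i) x0 - g0 i‖ ≤ R := fun i =>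
    hR ▸ le_sup' (fun i => ‖gradient (fi i) x0 - g0 i‖) (mem_univ i)
  have hR0 : 0 ≤ R := (norm_nonneg _).trans (hinit ⟨0, hn⟩)
  have hLiγ : ∀ i, Li i * γ ≤ β * R / (α + R) := fun i => by
    have hLi : Li i ≤ Lmax := hLmax ▸ le_sup' Li (mem_univ i)
    rw [mul_one_div, le_div_iff₀ ((hLipos i).trans_le hLi)] at hγle
    nlinarith [hLipos i]
  have hrun : ∀ ω, IsDPNormECRun fi α β γ (x · ω) (g · · ω) (z · · ω) (ghat · ω) := fun ω =>
    ⟨by rw [hghat0]; simp only [hg0], hg ω, hghat ω,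
      fun k => (hx ω k).trans (ite_eq_sub_smul_inv_norm_smul _ _ γ)⟩
  have hdesc : ∀ k ω, γ * ‖gradient f (x k ω)‖ ≤ f (x k ω) - f (x (k + 1) ω) +
      γ * (2 * R + L / 2 * γ + 2 * ‖(β / n) • ∑ l ∈ range (k + 1), ∑ i, z i l ω‖) :=
    fun k ω => (hrun ω).mul_norm_gradient_le hn (gradient_eq_smul_sum_of_eq_mul_sum hf fun i _ => hdiffi i)
      hdiff hL.le hlip hα hβ.le hβα hγ.le hR0
      ((hrun ω).norm_gradient_sub_le hα hβα hγ.le (fun i => (hLipos i).le) hlipi hLiγ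
        fun i => by rw [hx0, hg0]; exact hinit i) k
  have hmeas : ∀ k, Measurable (x k) := fun k =>
    (measurable_of_isDPNormECRun hrun (fun i => (continuous_of_norm_sub_le (hlipi i)).measurable)
      hzmeas (measurable_const' fun _ _ => by rw [hx0, hx0])
      (fun i => measurable_const' fun _ _ => by rw [hg0, hg0]) k).1
  have hint : ∀ {h : EuclideanSpace ℝ (Fin d) → ℝ}, Continuous h → ∀ k,
      Integrable (fun ω => h (x k ω)) μ := fun hh =>
    integrable_comp_of_norm_succ_sub_le (fun k => (hmeas k).aestronglyMeasurable) hx0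
      (fun k ω => (hrun ω).norm_succ_sub_le hγ.le k) hh
  have hz2 : ∀ i k, MemLp (z i k) 2 μ := fun i k =>
    (memLp_two_iff_integrable_sq_norm (hzmeas i k).aestronglyMeasurable).2 (hzint i k)
  refine (inf'_integral_le_of_descent (Z := fun k ω => 2 * ‖(β / n) • ∑ l ∈ range (k + 1),
      ∑ i, z i l ω‖) (B := 2 * √(β ^ 2 * (K + 1) * σDP ^ 2)) hγ K
    (fun k => hint (continuous_of_norm_sub_le hlip).norm k) (fun k => hint hdiff.continuous k)
    (fun k => ?_) hdesc (fun k hk => ?_) (fun ω => hfinf _)).trans_eq ?_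
  · exact (((memLp_finsetSum _ fun l _ => memLp_finsetSum _ fun i _ => hz2 i l).const_smul
      (β / n)).norm.integrable one_le_two).const_mul 2
  · rw [integral_const_mul]
    gcongr
    refine (integral_norm_smul_sum_sum_le hn hz2 hzorth hzvar hβ.le (k + 1)).trans ?_
    gcongr
    exact_mod_cast Nat.succ_le_succ hk
  · simp [hx0]
    ring

/-- Convergence of DP-α-NormEC (Theorem 2): under `0 < β ≤ α` and
`0 < γ ≤ (βR/(α+R))·(1/L_max)` with `R = max_i ‖∇f_i(x⁰) − g_i⁰‖` and
`L_max = max_i L_i`, and for noise with `E[‖z_i^k‖²] ≤ σ_DP²` and pairwise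
orthogonality, the DP-α-NormEC iterates satisfy, for every `K`,
`min_{0≤k≤K} E[‖∇f(x^k)‖] ≤ (f(x⁰) − f_inf)/(γ(K+1)) + 2R + (L/2)γ
  + 2√(β²(K+1)σ_DP²)`. -/
theorem dp_alpha_normec_convergence
    (d n : ℕ) (hn : 0 < n)
    {Ω : Type*} [MeasurableSpace Ω] (μ : Measure Ω) [IsProbabilityMeasure μ]
    (fi : Fin n → EuclideanSpace ℝ (Fin d) → ℝ)
    (f : EuclideanSpace ℝ (Fin d) → ℝ)
    (hf : ∀ y, f y = (n : ℝ)⁻¹ * ∑ i, fi i y)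
    (hdiffi : ∀ i, Differentiable ℝ (fi i))
    (hdiff : Differentiable ℝ f)
    (Li : Fin n → ℝ) (hLipos : ∀ i, 0 < Li i)
    (hlipi : ∀ i x y, ‖gradient (fi i) x - gradient (fi i) y‖ ≤ Li i * ‖x - y‖)
    (L : ℝ) (hL : 0 < L)
    (hlip : ∀ x y, ‖gradient f x - gradient f y‖ ≤ L * ‖x - y‖)
    (finf : ℝ) (hfinf : ∀ y, finf ≤ f y)
    (α β γ σDP Lmax R : ℝ) (hσ : 0 ≤ σDP)
    (hLmax : Lmax = Finset.univ.sup' (Finset.univ_nonempty_iff.mpr ⟨⟨0, hn⟩⟩) Li)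
    (x0 : EuclideanSpace ℝ (Fin d)) (g0 : Fin n → EuclideanSpace ℝ (Fin d))
    (x : ℕ → Ω → EuclideanSpace ℝ (Fin d))
    (g : Fin n → ℕ → Ω → EuclideanSpace ℝ (Fin d))
    (ghat : ℕ → Ω → EuclideanSpace ℝ (Fin d))
    (z : Fin n → ℕ → Ω → EuclideanSpace ℝ (Fin d))
    (hzmeas : ∀ i k, Measurable (z i k))
    (hzint : ∀ i k, Integrable (fun ω => ‖z i k ω‖ ^ 2) μ)
    (hzvar : ∀ i k, ∫ ω, ‖z i k ω‖ ^ 2 ∂μ ≤ σDP ^ 2)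
    (hzorth : ∀ (i : Fin n) (k : ℕ) (j : Fin n) (l : ℕ), (i, k) ≠ (j, l) →
      ∫ ω, (inner ℝ (z i k ω) (z j l ω) : ℝ) ∂μ = 0)
    (hx0 : ∀ ω, x 0 ω = x0)
    (hg0 : ∀ i ω, g i 0 ω = g0 i)
    (hghat0 : ∀ ω, ghat 0 ω = (n : ℝ)⁻¹ • ∑ i, g0 i)
    (hR : R = Finset.univ.sup' (Finset.univ_nonempty_iff.mpr ⟨⟨0, hn⟩⟩)
      (fun i => ‖gradient (fi i) x0 - g0 i‖))
    (hβ : 0 < β) (hβα : β ≤ α)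
    (hγ : 0 < γ) (hγle : γ ≤ (β * R / (α + R)) * (1 / Lmax))
    (hg : ∀ (ω : Ω) (i : Fin n) (k : ℕ), g i (k + 1) ω = g i k ω +
      β • ((α + ‖gradient (fi i) (x k ω) - g i k ω‖)⁻¹ •
        (gradient (fi i) (x k ω) - g i k ω)))
    (hghat : ∀ (ω : Ω) (k : ℕ), ghat (k + 1) ω = ghat k ω +
      (β / n) • ∑ i, (((α + ‖gradient (fi i) (x k ω) - g i k ω‖)⁻¹ •
        (gradient (fi i) (x k ω) - g i k ω)) + z i k ω))
    (hx : ∀ (ω : Ω) (k : ℕ), x (k + 1) ω =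
      if ghat (k + 1) ω = 0 then x k ω
      else x k ω - γ • ‖ghat (k + 1) ω‖⁻¹ • ghat (k + 1) ω)
    (K : ℕ) :
    (Finset.range (K + 1)).inf' (Finset.nonempty_range_iff.mpr (Nat.succ_ne_zero K))
        (fun k => ∫ ω, ‖gradient f (x k ω)‖ ∂μ) ≤
      (f x0 - finf) / (γ * (K + 1)) + 2 * R + (L / 2) * γ +
        2 * Real.sqrt (β ^ 2 * (K + 1) * σDP ^ 2) :=
  dp_alpha_normec_convergence_general d n hn μ fi f hf hdiffi hdiff Li hLipos hlipi L hL hlip finf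
    hfinf α β γ σDP Lmax R hLmax x0 g0 x g ghat z hzmeas hzint hzvar hzorth hx0 hg0 hghat0 hR hβ hβα
    hγ hγle hg hghat hx K
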